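/- Let q be a power of 2. Then there exists an element a in the finite field F_q such that the polynomial T^3 + aT + 1 is irreducible over F_q. -/

import Mathlib

/-!
A cubic over a field is irreducible as soon as it has no root. A root `x` of `T^3 + aT + 1`
is nonzero and determines `a = -(x^3 + 1)/x`, so the coefficients `a` admitting a root are the
image of a map defined on `Fˣ`; since `Fˣ` is smaller than `F`, some `a` is missed.
-/

open Polynomial

theorem irreducible_X_pow_three_add_C_mul_X_add_one {K : Type*} [Field K] {a : K}
    (h : ∀ x : K, x ^ 3 + a * x + 1 ≠ 0) : Irreducible (X ^ 3 + C a * X + 1 : K[X]) := by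
  have hdeg : (X ^ 3 + C a * X + 1 : K[X]).natDegree = 3 := by compute_degree!
  refine irreducible_of_degree_le_three_of_not_isRoot (by simp [hdeg]) fun x hx => h x ?_
  simpa using hx

theorem exists_forall_pow_three_add_mul_add_one_ne_zero (F : Type*) [Field F] [Finite F] :
    ∃ a : F, ∀ x : F, x ^ 3 + a * x + 1 ≠ 0 := by
  by_contra! hroot
  have hsurj : Function.Surjective fun u : Fˣ => -((u : F) ^ 3 + 1) / u := by
    intro a
    obtain ⟨x, hx⟩ := hroot a
    have hx0 : x ≠ 0 := by rintro rfl; simp at hx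
    refine ⟨Units.mk0 x hx0, ?_⟩
    change -(x ^ 3 + 1) / x = a
    rw [div_eq_iff hx0]
    linear_combination -hx
  have hcard := Nat.card_le_card_of_surjective _ hsurj
  rw [Nat.card_units] at hcard
  have : 0 < Nat.card F := Nat.card_pos
  omega

theorem stmt0_general (F : Type*) [Field F] [Fintype F] :
    ∃ a : F, Irreducible (X ^ 3 + C a * X + 1 : F[X]) := by
  obtain ⟨a, ha⟩ := exists_forall_pow_three_add_mul_add_one_ne_zero F
  exact ⟨a, irreducible_X_pow_three_add_C_mul_X_add_one ha⟩

/-- Let `q = 2^f` be a power of 2. Then there exists `a` in the finite field `F_q`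
such that `T^3 + a*T + 1` is irreducible over `F_q`. -/
theorem stmt0 (F : Type*) [Field F] [Fintype F] (f : ℕ) (hf : 0 < f)
    (hcard : Fintype.card F = 2 ^ f) :
    ∃ a : F, Irreducible (X ^ 3 + C a * X + 1 : F[X]) :=
  stmt0_general F
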